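/- arXiv:0901.2280 — 3 statements merged into one kernel-verified Lean document; each statement's English description precedes it below -/
import Mathlib

section
/- The complex-valued function f(t,x) = ((1-it)² + ‖x‖²)^{-(n-1)/2} (principal branch) is smooth on all of ℝ^{1+n} and satisfies the wave equation □f = 0. -/
open Function

lemma slit_aux (t : ℝ) (r : ℝ) (hr : 0 ≤ r) :
    (1 - Complex.I * t) ^ 2 + (r : ℂ) ∈ Complex.slitPlane := by
  have key : (1 - Complex.I * t) ^ 2 + (r : ℂ) = Complex.mk (1 - t^2 + r) (-2*t) := by
    apply Complex.ext <;>
      simp [sq, Complex.add_im, Complex.sub_im, Complex.mul_im, Complex.mul_re,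
        Complex.add_re, Complex.sub_re] <;> ring
  rw [key]
  rcases eq_or_ne t 0 with h | h
  · left
    simp [h]
    positivity
  · right
    simpa using fun hc => h (by linarith)

lemma hd_inner_tC (R : ℂ) (t : ℂ) :
    HasDerivAt (fun z : ℂ => (1 - Complex.I * z) ^ 2 + R)
      (-2 * Complex.I * (1 - Complex.I * t)) t := by
  have h2 : HasDerivAt (fun z : ℂ => 1 - Complex.I * z) (-Complex.I) t := by
    simpa using ((hasDerivAt_id t).const_mul Complex.I).const_sub 1
  have h3 := (h2.pow 2).add_const R
  refine h3.congr_deriv ?_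
  push_cast
  ring

lemma hd_t (R c : ℂ) (t : ℝ) (h0 : (1 - Complex.I * t) ^ 2 + R ∈ Complex.slitPlane) :
    HasDerivAt (fun s : ℝ => ((1 - Complex.I * s) ^ 2 + R) ^ c)
      (c * ((1 - Complex.I * t) ^ 2 + R) ^ (c - 1) * (-2 * Complex.I * (1 - Complex.I * t))) t :=
  ((hd_inner_tC R t).cpow_const h0).comp_ofReal

lemma hd_t2 (R c : ℂ) (t : ℝ) (h : ∀ s : ℝ, (1 - Complex.I * s) ^ 2 + R ∈ Complex.slitPlane) :
    HasDerivAt (fun s : ℝ => c * ((1 - Complex.I * s) ^ 2 + R) ^ (c - 1)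
        * (-2 * Complex.I * (1 - Complex.I * s)))
      (c * (c - 1) * ((1 - Complex.I * t) ^ 2 + R) ^ (c - 2)
          * (-2 * Complex.I * (1 - Complex.I * t)) * (-2 * Complex.I * (1 - Complex.I * t))
        + c * ((1 - Complex.I * t) ^ 2 + R) ^ (c - 1) * (-2)) t := by
  have h1 := (hd_t R (c - 1) t (h t)).const_mul c
  have hB : HasDerivAt (fun s : ℝ => -2 * Complex.I * (1 - Complex.I * s)) (-2 : ℂ) t := by
    have h2 : HasDerivAt (fun z : ℂ => -2 * Complex.I * (1 - Complex.I * z))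
        (-2 * Complex.I * -Complex.I) (t : ℂ) := by
      have := (((hasDerivAt_id (t : ℂ)).const_mul Complex.I).const_sub 1).const_mul
        (-2 * Complex.I)
      simpa using this
    have h4 := h2.comp_ofReal
    convert h4 using 1
    linear_combination (-2 : ℂ) * Complex.I_sq
  have h5 := h1.mul hB
  have hc : c - 1 - 1 = c - 2 := by ring
  rw [hc] at h5
  refine h5.congr_deriv ?_
  ring

lemma hd_innerC (K : ℂ) (a : ℂ) :
    HasDerivAt (fun z : ℂ => z ^ 2 + K) (2 * a) a := by
  have := ((hasDerivAt_id a).pow 2).add_const K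
  refine this.congr_deriv ?_
  simp [mul_comm]

lemma hd_x (K c : ℂ) (a : ℝ) (h0 : (a : ℂ) ^ 2 + K ∈ Complex.slitPlane) :
    HasDerivAt (fun s : ℝ => ((s : ℂ) ^ 2 + K) ^ c)
      (c * ((a : ℂ) ^ 2 + K) ^ (c - 1) * (2 * a)) a :=
  ((hd_innerC K a).cpow_const h0).comp_ofReal

lemma hd_x2 (K c : ℂ) (a : ℝ) (h : ∀ s : ℝ, (s : ℂ) ^ 2 + K ∈ Complex.slitPlane) :
    HasDerivAt (fun s : ℝ => c * ((s : ℂ) ^ 2 + K) ^ (c - 1) * (2 * s))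
      (c * (c - 1) * ((a : ℂ) ^ 2 + K) ^ (c - 2) * (2 * a) * (2 * a)
        + c * ((a : ℂ) ^ 2 + K) ^ (c - 1) * 2) a := by
  have h1 := (hd_x K (c - 1) a (h a)).const_mul c
  have hB : HasDerivAt (fun s : ℝ => 2 * (s : ℂ)) (2 : ℂ) a := by
    simpa using ((hasDerivAt_id ((a : ℝ) : ℂ)).const_mul 2).comp_ofReal
  have h5 := h1.mul hB
  have hc : c - 1 - 1 = c - 2 := by ring
  rw [hc] at h5
  refine h5.congr_deriv ?_
  ring

lemma sum_update_sq {n : ℕ} (x : Fin n → ℝ) (i : Fin n) (s : ℝ) :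
    ∑ j, (Function.update x i s j) ^ 2
      = s ^ 2 + ∑ j ∈ Finset.univ \ {i}, (x j) ^ 2 := by
  calc ∑ j, (Function.update x i s j) ^ 2
      = ∑ j, Function.update (fun j => (x j) ^ 2) i (s ^ 2) j :=
        Finset.sum_congr rfl fun j _ => by
          rcases eq_or_ne j i with rfl | h
          · simp
          · simp [Function.update_of_ne h]
    _ = s ^ 2 + ∑ j ∈ Finset.univ \ {i}, (x j) ^ 2 :=
        Finset.sum_update_of_mem (Finset.mem_univ i) _ _

noncomputable def pt {n : ℕ} (f : ℝ × (Fin n → ℝ) → ℂ) (p : ℝ × (Fin n → ℝ)) : ℂ :=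
  deriv (fun s => f (s, p.2)) p.1

noncomputable def px {n : ℕ} (i : Fin n) (f : ℝ × (Fin n → ℝ) → ℂ) (p : ℝ × (Fin n → ℝ)) : ℂ :=
  deriv (fun s => f (p.1, Function.update p.2 i s)) (p.2 i)

/-- The wave operator `□ = -∂_t² + Σᵢ ∂_{xᵢ}²`. -/
noncomputable def Box (n : ℕ) (f : ℝ × (Fin n → ℝ) → ℂ) : ℝ × (Fin n → ℝ) → ℂ :=
  fun p => -pt (pt f) p + ∑ i, px i (px i f) p

/-- The function `f(t,x) = ((1-it)² + ‖x‖²)^{-(n-1)/2}` (principal branch)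
is smooth on `ℝ^{1+n}` and solves the wave equation `□f = 0`. -/
theorem lowest_energy_solution (n : ℕ) (hn : 2 ≤ n) :
    let f : ℝ × (Fin n → ℝ) → ℂ := fun p =>
      ((1 - Complex.I * p.1) ^ 2 + ((∑ i, (p.2 i) ^ 2 : ℝ) : ℂ)) ^ (-(((n : ℂ) - 1) / 2))
    ContDiff ℝ (⊤ : ℕ∞) f ∧ ∀ p, Box n f p = 0 := by
  intro f
  set c : ℂ := -(((n : ℂ) - 1) / 2) with hc
  have hmem : ∀ p : ℝ × (Fin n → ℝ),
      (1 - Complex.I * p.1) ^ 2 + ((∑ i, (p.2 i) ^ 2 : ℝ) : ℂ) ∈ Complex.slitPlane :=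
    fun p => slit_aux p.1 _ (by positivity)
  constructor
  · -- smoothness
    have h1 : ContDiff ℝ (⊤ : ℕ∞) (fun p : ℝ × (Fin n → ℝ) => (∑ i, (p.2 i) ^ 2 : ℝ)) := by
      exact ContDiff.sum fun i _ =>
        ((ContinuousLinearMap.proj i : (Fin n → ℝ) →L[ℝ] ℝ).contDiff.comp
          contDiff_snd).pow 2
    have h2 : ContDiff ℝ (⊤ : ℕ∞) (fun p : ℝ × (Fin n → ℝ) => ((∑ i, (p.2 i) ^ 2 : ℝ) : ℂ)) :=
      Complex.ofRealCLM.contDiff.comp h1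
    have h3 : ContDiff ℝ (⊤ : ℕ∞) (fun p : ℝ × (Fin n → ℝ) => (1 - Complex.I * p.1) ^ 2) :=
      (contDiff_const.sub (contDiff_const.mul
        (Complex.ofRealCLM.contDiff.comp contDiff_fst))).pow 2
    have hW : ContDiff ℝ (⊤ : ℕ∞) (fun p : ℝ × (Fin n → ℝ) =>
        (1 - Complex.I * p.1) ^ 2 + ((∑ i, (p.2 i) ^ 2 : ℝ) : ℂ)) := h3.add h2
    rw [contDiff_iff_contDiffAt]
    intro p
    have han : AnalyticAt ℂ (fun z : ℂ => z ^ c)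
        ((1 - Complex.I * p.1) ^ 2 + ((∑ i, (p.2 i) ^ 2 : ℝ) : ℂ)) :=
      (analyticAt_id).cpow analyticAt_const (hmem p)
    exact ((han.contDiffAt).restrict_scalars ℝ).comp p hW.contDiffAt
  · -- wave equation
    rintro ⟨t, x⟩
    set R : ℂ := ((∑ i, (x i) ^ 2 : ℝ) : ℂ) with hR
    have hRmem : ∀ s : ℝ, (1 - Complex.I * s) ^ 2 + R ∈ Complex.slitPlane :=
      fun s => slit_aux s _ (by positivity)
    -- t direction
    have hpt : ∀ s : ℝ, pt f (s, x)
        = c * ((1 - Complex.I * s) ^ 2 + R) ^ (c - 1) * (-2 * Complex.I * (1 - Complex.I * s)) :=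
      fun s => (hd_t R c s (hRmem s)).deriv
    have hptpt : pt (pt f) (t, x)
        = c * (c - 1) * ((1 - Complex.I * t) ^ 2 + R) ^ (c - 2)
            * (-2 * Complex.I * (1 - Complex.I * t)) * (-2 * Complex.I * (1 - Complex.I * t))
          + c * ((1 - Complex.I * t) ^ 2 + R) ^ (c - 1) * (-2) := by
      have : pt (pt f) (t, x) = deriv (fun s => pt f (s, x)) t := rfl
      rw [this, funext hpt]
      exact (hd_t2 R c t hRmem).deriv
    -- x directions
    have hpxpx : ∀ i : Fin n, px i (px i f) (t, x)
        = c * (c - 1) * ((1 - Complex.I * t) ^ 2 + R) ^ (c - 2)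
            * (2 * (x i : ℂ)) * (2 * (x i : ℂ))
          + c * ((1 - Complex.I * t) ^ 2 + R) ^ (c - 1) * 2 := by
      intro i
      set C : ℝ := ∑ j ∈ Finset.univ \ {i}, (x j) ^ 2 with hC
      set K : ℂ := (1 - Complex.I * t) ^ 2 + (C : ℂ) with hK
      have hsum : (∑ j, (x j) ^ 2 : ℝ) = (x i) ^ 2 + C := by
        have := sum_update_sq x i (x i)
        rwa [Function.update_eq_self] at this
      have hWK : ∀ s : ℝ, (s : ℂ) ^ 2 + K = (1 - Complex.I * t) ^ 2 + ((s ^ 2 + C : ℝ) : ℂ) := by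
        intro s; rw [hK]; push_cast; ring
      have hKmem : ∀ s : ℝ, (s : ℂ) ^ 2 + K ∈ Complex.slitPlane := by
        intro s; rw [hWK s]; exact slit_aux t _ (by positivity)
      have hWeq : ((x i : ℝ) : ℂ) ^ 2 + K = (1 - Complex.I * t) ^ 2 + R := by
        rw [hWK, hR, hsum]
      have hfx : ∀ y : ℝ, ∀ s : ℝ, f (t, Function.update x i s) = ((s : ℂ) ^ 2 + K) ^ c := by
        intro _ s
        show ((1 - Complex.I * t) ^ 2 + ((∑ j, (Function.update x i s j) ^ 2 : ℝ) : ℂ)) ^ c = _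
        rw [sum_update_sq, hWK s]
      have hpx : ∀ s : ℝ, px i f (t, Function.update x i s)
          = c * ((s : ℂ) ^ 2 + K) ^ (c - 1) * (2 * s) := by
        intro s
        have h1 : px i f (t, Function.update x i s)
            = deriv (fun s' => f (t, Function.update x i s')) s := by
          show deriv (fun s' => f (t, Function.update (Function.update x i s) i s'))
            (Function.update x i s i) = _
          rw [Function.update_self]
          congr 1
          funext s'
          rw [Function.update_idem]
        rw [h1, funext (hfx 0)]
        exact (hd_x K c s (hKmem s)).deriv
      have h2 : px i (px i f) (t, x) = deriv (fun s => px i f (t, Function.update x i s)) (x i) := by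
        show deriv (fun s => px i f (t, Function.update x i s)) (x i) = _
        rfl
      rw [h2, funext hpx, ← hWeq]
      exact (hd_x2 K c (x i) hKmem).deriv
    -- combine
    have hbox : Box n f (t, x) = -pt (pt f) (t, x) + ∑ i, px i (px i f) (t, x) := rfl
    rw [hbox, hptpt, Finset.sum_congr rfl (fun i _ => hpxpx i)]
    rw [Finset.sum_add_distrib, Finset.sum_const, Finset.card_univ, Fintype.card_fin,
      nsmul_eq_mul]
    have hsumR : (∑ i, c * (c - 1) * ((1 - Complex.I * t) ^ 2 + R) ^ (c - 2)
          * (2 * (x i : ℂ)) * (2 * (x i : ℂ)))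
        = c * (c - 1) * ((1 - Complex.I * t) ^ 2 + R) ^ (c - 2) * 4 * R := by
      rw [hR]
      push_cast
      rw [Finset.mul_sum]
      exact Finset.sum_congr rfl fun i _ => by ring
    rw [hsumR]
    have hne : (1 - Complex.I * t) ^ 2 + R ≠ 0 := Complex.slitPlane_ne_zero (hRmem t)
    have hWc1 : ((1 - Complex.I * t) ^ 2 + R) ^ (c - 2) * ((1 - Complex.I * t) ^ 2 + R)
        = ((1 - Complex.I * t) ^ 2 + R) ^ (c - 1) := by
      rw [show c - 1 = (c - 2) + 1 from by ring, Complex.cpow_add _ _ hne, Complex.cpow_one]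
    linear_combination (-4 * c * (c - 1) * ((1 - Complex.I * t) ^ 2 + R) ^ (c - 2)
        * (1 - Complex.I * t) ^ 2) * Complex.I_sq
      + (4 * c * (c - 1)) * hWc1
      + (4 * c * ((1 - Complex.I * t) ^ 2 + R) ^ (c - 1)) * hc
end

section
/- If h is a harmonic homogeneous polynomial of degree l on ℝⁿ, then the function f(t,x) = h(x) · ((1-it)² + ‖x‖²)^{-(l + (n-1)/2)} satisfies the wave equation □f = 0 on ℝ^{1+n}. -/
/-!
Write `u = (1 - i t)² + ‖x‖² = ‖x‖² - (t + i)²`. Then `□u = 2(n + 1)` and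
`-(∂ₜu)² + ‖∇u‖² = 4u`, so the chain and product rules give
`□(h u^c) = (Δh) u^c + 2c u^(c-1) (2 x·∇h + (n - 1 + 2c) h)`.
For `h` harmonic and homogeneous of degree `l`, Euler's identity `x·∇h = l h` makes the right-hand
side vanish for `c = -(l + (n - 1)/2)`.
-/

open Function

namespace MvPolynomial

variable {𝕜 σ : Type*} [NontriviallyNormedField 𝕜] [DecidableEq σ]

theorem hasDerivAt_eval_update (p : MvPolynomial σ 𝕜) (x : σ → 𝕜) (i : σ) (y : 𝕜) :
    HasDerivAt (fun s => eval (update x i s) p) (eval (update x i y) (pderiv i p)) y := by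
  induction p using MvPolynomial.induction_on with
  | C a => simpa using hasDerivAt_const y a
  | add p q hp hq => simpa using hp.fun_add hq
  | mul_X p j hp =>
    have hj : HasDerivAt (fun s => update x i s j) ((Pi.single i 1 : σ → 𝕜) j) y :=
      hasDerivAt_pi.mp (hasDerivAt_update x i y) j
    simp only [map_mul, eval_X]
    refine (hp.fun_mul hj).congr_deriv ?_
    rw [Derivation.leibniz, pderiv_X]
    rcases eq_or_ne j i with rfl | hji
    · simp; ring
    · simp [Pi.single_eq_of_ne hji, update_of_ne hji, mul_comm]

end MvPolynomial

section SecondDerivative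

variable {𝕜 : Type*} [NontriviallyNormedField 𝕜] [NormedAlgebra 𝕜 ℂ]
  {g g' g'' v v' v'' : 𝕜 → ℂ}

theorem deriv_deriv_mul_cpow (hg : ∀ s, HasDerivAt g (g' s) s)
    (hg' : ∀ s, HasDerivAt g' (g'' s) s) (hv : ∀ s, HasDerivAt v (v' s) s)
    (hv' : ∀ s, HasDerivAt v' (v'' s) s) (hslit : ∀ s, v s ∈ Complex.slitPlane)
    (c : ℂ) (t : 𝕜) :
    deriv (deriv fun s => g s * v s ^ c) t =
      g'' t * v t ^ c + 2 * c * g' t * v' t * v t ^ (c - 1)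
        + c * g t * (v'' t * v t ^ (c - 1) + (c - 1) * v' t ^ 2 * v t ^ (c - 1 - 1)) := by
  have hpow : ∀ (d : ℂ) s, HasDerivAt (fun s => v s ^ d) (d * v s ^ (d - 1) * v' s) s :=
    fun d s => (Complex.hasStrictDerivAt_cpow_const (c := d) (hslit s)).hasDerivAt.comp s (hv s)
  have hfirst : deriv (fun s => g s * v s ^ c) =
      fun s => g' s * v s ^ c + c * (g s * v' s) * v s ^ (c - 1) := by
    funext s
    rw [((hg s).fun_mul (hpow c s)).deriv]
    ring
  rw [hfirst, (((hg' t).fun_mul (hpow c t)).fun_add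
    ((((hg t).fun_mul (hv' t)).const_mul c).fun_mul (hpow (c - 1) t))).deriv]
  ring

end SecondDerivative

section Slices

variable {n : ℕ} (f : ℝ × (Fin n → ℝ) → ℂ) (t : ℝ) (x : Fin n → ℝ)

theorem pt_pt_eq_deriv_deriv : pt (pt f) (t, x) = deriv (deriv fun s => f (s, x)) t := rfl

theorem px_px_eq_deriv_deriv (i : Fin n) :
    px i (px i f) (t, x) = deriv (deriv fun s => f (t, update x i s)) (x i) := by
  simp only [px, update_idem, update_self]

end Slices

open Complex in
/-- `‖x‖² - τ²` at the complex time `τ = t + i`. -/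
noncomputable def shiftedMinkowskiForm {n : ℕ} (p : ℝ × (Fin n → ℝ)) : ℂ :=
  (1 - I * p.1) ^ 2 + ((∑ i, (p.2 i) ^ 2 : ℝ) : ℂ)

namespace shiftedMinkowskiForm

open Complex

variable {n : ℕ}

theorem mem_slitPlane (p : ℝ × (Fin n → ℝ)) : shiftedMinkowskiForm p ∈ slitPlane := by
  rw [mem_slitPlane_iff]
  rcases eq_or_ne p.1 0 with h0 | h0
  · left
    have : 0 ≤ ∑ i, p.2 i ^ 2 := Finset.sum_nonneg fun i _ => sq_nonneg _
    simp only [shiftedMinkowskiForm, h0, ofReal_zero, mul_zero, sub_zero, one_pow, add_re,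
      one_re, ofReal_re]
    positivity
  · right
    simpa [shiftedMinkowskiForm, pow_two] using h0

theorem ne_zero (p : ℝ × (Fin n → ℝ)) : shiftedMinkowskiForm p ≠ 0 :=
  slitPlane_ne_zero (mem_slitPlane p)

theorem hasDerivAt_time (x : Fin n → ℝ) (s : ℝ) :
    HasDerivAt (fun s => shiftedMinkowskiForm (s, x)) (-2 * I * (1 - I * s)) s := by
  have h1 : HasDerivAt (fun s : ℝ => 1 - I * s) (-I) s := by
    simpa using ((hasDerivAt_id s).ofReal_comp.const_mul I).const_sub 1
  refine ((h1.fun_pow 2).add_const ((∑ i, x i ^ 2 : ℝ) : ℂ)).congr_deriv ?_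
  ring

theorem hasDerivAt_space (t : ℝ) (x : Fin n → ℝ) (i : Fin n) (s : ℝ) :
    HasDerivAt (fun s => shiftedMinkowskiForm (t, update x i s)) (2 * s) s := by
  have hsum : HasDerivAt (fun s => ∑ j, update x i s j ^ 2) (2 * s) s := by
    have := HasDerivAt.fun_sum (u := Finset.univ) fun j _ =>
      (hasDerivAt_pi.mp (hasDerivAt_update x i s) j).fun_pow 2
    exact this.congr_deriv (by simp [Pi.single_apply])
  exact (hsum.ofReal_comp.const_add ((1 - I * t) ^ 2)).congr_deriv (by push_cast; ring)

end shiftedMinkowskiForm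

section WaveOperator

open MvPolynomial Complex

variable {n : ℕ} (h : MvPolynomial (Fin n) ℝ) (c : ℂ) (t : ℝ) (x : Fin n → ℝ)

theorem pt_pt_mul_cpow_shiftedMinkowskiForm :
    pt (pt fun p => (eval p.2 h : ℂ) * shiftedMinkowskiForm p ^ c) (t, x) =
      -2 * c * (eval x h : ℂ) * (shiftedMinkowskiForm (t, x) ^ (c - 1)
        + 2 * (c - 1) * (1 - I * t) ^ 2 * shiftedMinkowskiForm (t, x) ^ (c - 1 - 1)) := by
  have hv' : ∀ s : ℝ, HasDerivAt (fun s : ℝ => -2 * I * (1 - I * s)) (-2) s := fun s => by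
    simpa [mul_assoc] using
      (((hasDerivAt_id s).ofReal_comp.const_mul I).const_sub 1).const_mul (-2 * I)
  refine (deriv_deriv_mul_cpow (fun _ => hasDerivAt_const _ (eval x h : ℂ))
    (fun _ => hasDerivAt_const _ 0) (shiftedMinkowskiForm.hasDerivAt_time x) hv'
    (fun s => shiftedMinkowskiForm.mem_slitPlane (s, x)) c t).trans ?_
  linear_combination (4 * c * (eval x h : ℂ) * (c - 1) * (1 - I * t) ^ 2
    * shiftedMinkowskiForm (t, x) ^ (c - 1 - 1)) * I_sq

theorem px_px_mul_cpow_shiftedMinkowskiForm (i : Fin n) :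
    px i (px i fun p => (eval p.2 h : ℂ) * shiftedMinkowskiForm p ^ c) (t, x) =
      (eval x (pderiv i (pderiv i h)) : ℂ) * shiftedMinkowskiForm (t, x) ^ c
        + (x i * eval x (pderiv i h) : ℂ) * (4 * c * shiftedMinkowskiForm (t, x) ^ (c - 1))
        + (eval x h : ℂ) * (2 * c * shiftedMinkowskiForm (t, x) ^ (c - 1))
        + (x i : ℂ) ^ 2 * (4 * c * (c - 1) * (eval x h : ℂ)
          * shiftedMinkowskiForm (t, x) ^ (c - 1 - 1)) := by
  have hv' : ∀ s : ℝ, HasDerivAt (fun s : ℝ => 2 * (s : ℂ)) 2 s := fun s => by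
    simpa using (hasDerivAt_id s).ofReal_comp.const_mul (2 : ℂ)
  rw [px_px_eq_deriv_deriv]
  refine (deriv_deriv_mul_cpow (fun s => (hasDerivAt_eval_update h x i s).ofReal_comp)
    (fun s => (hasDerivAt_eval_update (pderiv i h) x i s).ofReal_comp)
    (shiftedMinkowskiForm.hasDerivAt_space t x i) hv'
    (fun s => shiftedMinkowskiForm.mem_slitPlane (t, _)) c (x i)).trans ?_
  simp only [update_eq_self]
  ring

theorem box_mul_cpow_shiftedMinkowskiForm :
    Box n (fun p => (eval p.2 h : ℂ) * shiftedMinkowskiForm p ^ c) (t, x) =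
      (eval x (∑ i, pderiv i (pderiv i h)) : ℂ) * shiftedMinkowskiForm (t, x) ^ c
        + 2 * c * shiftedMinkowskiForm (t, x) ^ (c - 1)
          * (2 * (eval x (∑ i, X i * pderiv i h) : ℂ) + (n - 1 + 2 * c) * (eval x h : ℂ)) := by
  set u := shiftedMinkowskiForm (t, x) with hu
  have hnorm : ∑ i, (x i : ℂ) ^ 2 = u - (1 - I * t) ^ 2 := by
    rw [hu, shiftedMinkowskiForm]
    push_cast
    ring
  have hpow : u ^ (c - 1) = u ^ (c - 1 - 1) * u := by
    have hu0 : u ≠ 0 := shiftedMinkowskiForm.ne_zero _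
    rw [cpow_sub (c - 1) 1 hu0, cpow_one, div_mul_cancel₀ _ hu0]
  simp only [Box]
  rw [pt_pt_mul_cpow_shiftedMinkowskiForm,
    Finset.sum_congr rfl fun i _ => px_px_mul_cpow_shiftedMinkowskiForm h c t x i]
  simp only [Finset.sum_add_distrib, ← Finset.sum_mul, Finset.sum_const, Finset.card_univ,
    Fintype.card_fin, nsmul_eq_mul, map_sum, map_mul, eval_X, ofReal_sum, ofReal_mul, hnorm]
  rw [hpow]
  ring

end WaveOperator

open MvPolynomial in
theorem harmonic_times_power_solution_general (n l : ℕ)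
    (h : MvPolynomial (Fin n) ℝ) (hhom : h.IsHomogeneous l)
    (hharm : ∑ i : Fin n, pderiv i (pderiv i h) = 0) :
    let f : ℝ × (Fin n → ℝ) → ℂ := fun p =>
      ((eval p.2 h : ℝ) : ℂ) *
        ((1 - Complex.I * p.1) ^ 2 + ((∑ i, (p.2 i) ^ 2 : ℝ) : ℂ))
          ^ (-((l : ℂ) + ((n : ℂ) - 1) / 2))
    ∀ p, Box n f p = 0 := by
  intro f ⟨t, x⟩
  refine (box_mul_cpow_shiftedMinkowskiForm h _ t x).trans ?_
  rw [hharm, hhom.sum_X_mul_pderiv]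
  simp only [nsmul_eq_mul, map_zero, map_mul, map_natCast, Complex.ofReal_zero,
    Complex.ofReal_mul, Complex.ofReal_natCast, zero_mul, zero_add]
  ring

open MvPolynomial in
/-- If `h` is a harmonic polynomial on `ℝⁿ`, homogeneous of degree `l`, then
`f(t,x) = h(x)·((1-it)² + ‖x‖²)^{-(l+(n-1)/2)}` solves the wave equation. -/
theorem harmonic_times_power_solution (n l : ℕ) (hn : 2 ≤ n)
    (h : MvPolynomial (Fin n) ℝ) (hhom : h.IsHomogeneous l)
    (hharm : ∑ i : Fin n, pderiv i (pderiv i h) = 0) :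
    let f : ℝ × (Fin n → ℝ) → ℂ := fun p =>
      ((eval p.2 h : ℝ) : ℂ) *
        ((1 - Complex.I * p.1) ^ 2 + ((∑ i, (p.2 i) ^ 2 : ℝ) : ℂ))
          ^ (-((l : ℂ) + ((n : ℂ) - 1) / 2))
    ∀ p, Box n f p = 0 :=
  harmonic_times_power_solution_general n l h hhom hharm
end

section
/- Let n ≥ 2, r = (1-n)/2, l ≥ 0, d ≥ 0 integers, and p = 2(l+d-r). Define q(t,x) = -t² + ‖x‖², λ(t,x) = ((1-q)² + 4‖x‖²)^{1/2}, and g_{p,l}(t,x) = λ^d · C_d^{l-r}((1-q)/λ) where C_d^{l-r} is the Gegenbauer polynomial of degree d and parameter l-r. Then g_{p,l} is a polynomial in (t,x) of degree 2d. -/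
open Polynomial

noncomputable def gegenbauer (α : ℝ) : ℕ → Polynomial ℝ
  | 0 => 1
  | 1 => Polynomial.C (2 * α) * Polynomial.X
  | (d + 2) =>
      Polynomial.C ((2 * ((d : ℝ) + 1 + α)) / ((d : ℝ) + 2)) * Polynomial.X
          * gegenbauer α (d + 1)
        - Polynomial.C (((d : ℝ) + 2 * α) / ((d : ℝ) + 2)) * gegenbauer α d

/-- `q(t,x) = -t² + ‖x‖²`. -/
noncomputable def qfun {n : ℕ} (t : ℝ) (x : Fin n → ℝ) : ℝ := -t ^ 2 + ∑ i, (x i) ^ 2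

/-- `λ(t,x) = ((1-q)² + 4‖x‖²)^{1/2}`. -/
noncomputable def lamfun {n : ℕ} (t : ℝ) (x : Fin n → ℝ) : ℝ :=
  Real.sqrt ((1 - qfun t x) ^ 2 + 4 * ∑ i, (x i) ^ 2)

/-- `g_{p,l}(t,x) = λ^d · C_d^{l-r}((1-q)/λ)`. -/
noncomputable def gpl {n : ℕ} (r : ℝ) (l d : ℕ) (t : ℝ) (x : Fin n → ℝ) : ℝ :=
  (lamfun t x) ^ d * (gegenbauer ((l : ℝ) - r) d).eval ((1 - qfun t x) / lamfun t x)

namespace GplAux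
open MvPolynomial

noncomputable def SQ (n : ℕ) : MvPolynomial (Fin (n+1)) ℝ := ∑ i : Fin n, X i.succ ^ 2
noncomputable def QP (n : ℕ) : MvPolynomial (Fin (n+1)) ℝ := - X 0 ^ 2 + SQ n
noncomputable def UP (n : ℕ) : MvPolynomial (Fin (n+1)) ℝ := 1 - QP n
noncomputable def WP (n : ℕ) : MvPolynomial (Fin (n+1)) ℝ := UP n ^ 2 + MvPolynomial.C 4 * SQ n

noncomputable def Pg (n : ℕ) (α : ℝ) : ℕ → MvPolynomial (Fin (n+1)) ℝ
  | 0 => 1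
  | 1 => MvPolynomial.C (2 * α) * UP n
  | (d + 2) =>
      MvPolynomial.C ((2 * ((d : ℝ) + 1 + α)) / ((d : ℝ) + 2)) * (UP n * Pg n α (d+1))
        - MvPolynomial.C (((d : ℝ) + 2 * α) / ((d : ℝ) + 2)) * (WP n * Pg n α d)

variable {n : ℕ}

lemma eval_SQ (t : ℝ) (x : Fin n → ℝ) :
    eval (Fin.cons t x) (SQ n) = ∑ i, (x i) ^ 2 := by
  simp [SQ]

lemma eval_QP (t : ℝ) (x : Fin n → ℝ) :
    eval (Fin.cons t x) (QP n) = qfun t x := by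
  simp [QP, eval_SQ, qfun]

lemma eval_UP (t : ℝ) (x : Fin n → ℝ) :
    eval (Fin.cons t x) (UP n) = 1 - qfun t x := by
  simp [UP, eval_QP]

lemma lam_pos (t : ℝ) (x : Fin n → ℝ) : 0 < lamfun t x := by
  rw [lamfun]
  apply Real.sqrt_pos.2
  have hs : (0:ℝ) ≤ ∑ i, (x i) ^ 2 := Finset.sum_nonneg fun i _ => sq_nonneg _
  rcases hs.lt_or_eq with h | h
  · nlinarith [sq_nonneg (1 - qfun t x)]
  · have hq : qfun t x = -t ^ 2 := by rw [qfun, ← h]; ring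
    rw [hq, ← h]
    nlinarith [sq_nonneg t]

lemma eval_WP (t : ℝ) (x : Fin n → ℝ) :
    eval (Fin.cons t x) (WP n) = (lamfun t x) ^ 2 := by
  have h : (0:ℝ) ≤ (1 - qfun t x) ^ 2 + 4 * ∑ i, (x i) ^ 2 := by
    have hs : (0:ℝ) ≤ ∑ i, (x i) ^ 2 := Finset.sum_nonneg fun i _ => sq_nonneg _
    nlinarith [sq_nonneg (1 - qfun t x)]
  simp [WP, eval_UP, eval_SQ, lamfun, Real.sq_sqrt h]

lemma eval_Pg (α : ℝ) (t : ℝ) (x : Fin n → ℝ) : ∀ d : ℕ,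
    eval (Fin.cons t x) (Pg n α d)
      = (lamfun t x) ^ d
        * (gegenbauer α d).eval ((1 - qfun t x) / lamfun t x) := by
  have hL : lamfun t x ≠ 0 := (lam_pos t x).ne'
  have hLs : lamfun t x * ((1 - qfun t x) / lamfun t x) = 1 - qfun t x :=
    mul_div_cancel₀ _ hL
  intro d
  induction d using Nat.twoStepInduction with
  | zero => simp [Pg, gegenbauer]
  | one =>
      rw [show Pg n α 1 = MvPolynomial.C (2 * α) * UP n from rfl,
        show gegenbauer α 1 = Polynomial.C (2 * α) * Polynomial.X from rfl]
      rw [map_mul, MvPolynomial.eval_C, eval_UP, Polynomial.eval_mul,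
        Polynomial.eval_C, Polynomial.eval_X, pow_one]
      field_simp
  | more d ih ih1 =>
      rw [show Pg n α (d+2)
          = MvPolynomial.C ((2 * ((d : ℝ) + 1 + α)) / ((d : ℝ) + 2)) * (UP n * Pg n α (d+1))
            - MvPolynomial.C (((d : ℝ) + 2 * α) / ((d : ℝ) + 2)) * (WP n * Pg n α d) from rfl,
        show gegenbauer α (d+2)
          = Polynomial.C ((2 * ((d : ℝ) + 1 + α)) / ((d : ℝ) + 2)) * Polynomial.X
              * gegenbauer α (d + 1)
            - Polynomial.C (((d : ℝ) + 2 * α) / ((d : ℝ) + 2)) * gegenbauer α d from rfl]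
      simp only [map_sub, map_mul, MvPolynomial.eval_C, eval_UP, eval_WP, ih, ih1,
        Polynomial.eval_sub, Polynomial.eval_mul, Polynomial.eval_C, Polynomial.eval_X]
      set L := lamfun t x with hLdef
      set s := (1 - qfun t x) / L with hs
      rw [show (1 : ℝ) - qfun t x = L * s from hLs.symm]
      ring

lemma totalDegree_neg' (p : MvPolynomial (Fin (n+1)) ℝ) :
    (-p).totalDegree = p.totalDegree := by
  simp [MvPolynomial.totalDegree, MvPolynomial.support_neg]

lemma totalDegree_SQ_le : (SQ n).totalDegree ≤ 2 :=
  totalDegree_finsetSum_le fun i _ => (totalDegree_X_pow _ _).le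

lemma totalDegree_QP_le : (QP n).totalDegree ≤ 2 :=
  (totalDegree_add _ _).trans <| max_le
    (by rw [totalDegree_neg']; exact (totalDegree_X_pow _ _).le) totalDegree_SQ_le

lemma totalDegree_UP_le : (UP n).totalDegree ≤ 2 := by
  rw [show UP n = 1 + -QP n by rw [UP]; ring]
  exact (totalDegree_add _ _).trans <| max_le (by simp [totalDegree_one])
    (by rw [totalDegree_neg']; exact totalDegree_QP_le)

lemma totalDegree_WP_le : (WP n).totalDegree ≤ 4 :=
  (totalDegree_add _ _).trans <| max_le
    ((totalDegree_pow _ _).trans (by have := totalDegree_UP_le (n := n); omega))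
    ((totalDegree_mul _ _).trans
      (by rw [totalDegree_C]; have := totalDegree_SQ_le (n := n); omega))

lemma totalDegree_Pg_le (α : ℝ) : ∀ d : ℕ, (Pg n α d).totalDegree ≤ 2 * d := by
  intro d
  induction d using Nat.twoStepInduction with
  | zero => simp [Pg, totalDegree_one]
  | one =>
      refine (totalDegree_mul _ _).trans ?_
      rw [totalDegree_C]
      simpa using totalDegree_UP_le (n := n)
  | more d ih ih1 =>
      rw [show Pg n α (d+2)
          = MvPolynomial.C ((2 * ((d : ℝ) + 1 + α)) / ((d : ℝ) + 2)) * (UP n * Pg n α (d+1))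
            - MvPolynomial.C (((d : ℝ) + 2 * α) / ((d : ℝ) + 2)) * (WP n * Pg n α d) from rfl,
        sub_eq_add_neg]
      refine (totalDegree_add _ _).trans (max_le ?_ ?_)
      · refine (totalDegree_mul _ _).trans ?_
        rw [totalDegree_C]
        refine le_trans (by simpa using totalDegree_mul (UP n) (Pg n α (d+1))) ?_
        have := totalDegree_UP_le (n := n); omega
      · rw [totalDegree_neg']
        refine (totalDegree_mul _ _).trans ?_
        rw [totalDegree_C]
        refine le_trans (by simpa using totalDegree_mul (WP n) (Pg n α d)) ?_
        have := totalDegree_WP_le (n := n); omega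

noncomputable def phi (n : ℕ) : MvPolynomial (Fin (n+1)) ℝ →ₐ[ℝ] Polynomial ℝ :=
  MvPolynomial.aeval (Fin.cons Polynomial.X fun _ => 0)

lemma phi_SQ : phi n (SQ n) = 0 := by
  simp [phi, SQ]

lemma phi_UP : phi n (UP n) = 1 + Polynomial.X ^ 2 := by
  simp [phi, UP, QP, SQ]

lemma phi_WP : phi n (WP n) = (1 + Polynomial.X ^ 2) ^ 2 := by
  have h1 : phi n (UP n ^ 2) = (1 + Polynomial.X ^ 2) ^ 2 := by
    rw [map_pow, phi_UP]
  have h2 : phi n (MvPolynomial.C 4 * SQ n) = 0 := by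
    rw [map_mul, phi_SQ, mul_zero]
  rw [WP, map_add, h1, h2, add_zero]

lemma phi_Pg (α : ℝ) : ∀ d : ℕ,
    phi n (Pg n α d)
      = Polynomial.C ((gegenbauer α d).eval 1) * (1 + Polynomial.X ^ 2) ^ d := by
  intro d
  induction d using Nat.twoStepInduction with
  | zero => simp [Pg, gegenbauer]
  | one =>
      rw [show Pg n α 1 = MvPolynomial.C (2 * α) * UP n from rfl, map_mul, phi_UP]
      simp [gegenbauer]
  | more d ih ih1 =>
      rw [show Pg n α (d+2)
          = MvPolynomial.C ((2 * ((d : ℝ) + 1 + α)) / ((d : ℝ) + 2)) * (UP n * Pg n α (d+1))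
            - MvPolynomial.C (((d : ℝ) + 2 * α) / ((d : ℝ) + 2)) * (WP n * Pg n α d) from rfl,
        show gegenbauer α (d+2)
          = Polynomial.C ((2 * ((d : ℝ) + 1 + α)) / ((d : ℝ) + 2)) * Polynomial.X
              * gegenbauer α (d + 1)
            - Polynomial.C (((d : ℝ) + 2 * α) / ((d : ℝ) + 2)) * gegenbauer α d from rfl]
      rw [map_sub, map_mul, map_mul, map_mul, map_mul, phi_UP, phi_WP, ih, ih1]
      have hC : ∀ c : ℝ, phi n (MvPolynomial.C c) = Polynomial.C c := by
        intro c; simp [phi]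
      rw [hC, hC]
      simp only [Polynomial.eval_sub, Polynomial.eval_mul, Polynomial.eval_C,
        Polynomial.eval_X, Polynomial.C_sub, Polynomial.C_mul, Polynomial.C_1]
      ring

lemma geg_one_ge {α : ℝ} (hα : (1:ℝ)/2 ≤ α) : ∀ d : ℕ,
    1 ≤ (gegenbauer α d).eval 1 ∧
      (gegenbauer α d).eval 1 ≤ (gegenbauer α (d+1)).eval 1 := by
  intro d
  induction d with
  | zero =>
      constructor
      · simp [gegenbauer]
      · simp [gegenbauer]; linarith
  | succ d ih =>
      have hd2 : (0:ℝ) < (d:ℝ) + 2 := by positivity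
      have hv2 : (gegenbauer α (d+2)).eval 1
          = (2 * ((d : ℝ) + 1 + α)) / ((d : ℝ) + 2) * (gegenbauer α (d+1)).eval 1
            - ((d : ℝ) + 2 * α) / ((d : ℝ) + 2) * (gegenbauer α d).eval 1 := by
        rw [show gegenbauer α (d+2)
          = Polynomial.C ((2 * ((d : ℝ) + 1 + α)) / ((d : ℝ) + 2)) * Polynomial.X
              * gegenbauer α (d + 1)
            - Polynomial.C (((d : ℝ) + 2 * α) / ((d : ℝ) + 2)) * gegenbauer α d from rfl]
        simp
      have key : (2 * ((d : ℝ) + 1 + α)) / ((d : ℝ) + 2)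
          = 1 + ((d : ℝ) + 2 * α) / ((d : ℝ) + 2) := by
        field_simp
        ring
      have hb : 0 ≤ ((d : ℝ) + 2 * α) / ((d : ℝ) + 2) :=
        div_nonneg (by have : (0:ℝ) ≤ (d:ℝ) := Nat.cast_nonneg d; linarith) hd2.le
      obtain ⟨h1, h2⟩ := ih
      have h1' : 1 ≤ (gegenbauer α (d+1)).eval 1 := h1.trans h2
      refine ⟨h1', ?_⟩
      rw [hv2, key]
      nlinarith [mul_nonneg hb (sub_nonneg.2 h2)]

lemma natDegree_aeval_le (f : Fin (n+1) → Polynomial ℝ) (hf : ∀ i, (f i).natDegree ≤ 1)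
    (P : MvPolynomial (Fin (n+1)) ℝ) :
    ((MvPolynomial.aeval f) P).natDegree ≤ P.totalDegree := by
  conv_lhs => rw [P.as_sum]
  rw [map_sum]
  refine Polynomial.natDegree_sum_le_of_forall_le _ _ fun m hm => ?_
  rw [MvPolynomial.aeval_monomial]
  refine Polynomial.natDegree_mul_le.trans ?_
  have h0 : (algebraMap ℝ (Polynomial ℝ) (MvPolynomial.coeff m P)).natDegree = 0 := by
    rw [Polynomial.algebraMap_eq]; exact Polynomial.natDegree_C _
  rw [h0, zero_add]
  refine le_trans ?_ (MvPolynomial.le_totalDegree hm)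
  rw [Finsupp.prod, Finsupp.sum]
  refine (Polynomial.natDegree_prod_le _ _).trans ?_
  refine Finset.sum_le_sum fun i _ => ?_
  calc ((f i) ^ m i).natDegree ≤ m i * (f i).natDegree := Polynomial.natDegree_pow_le
    _ ≤ m i * 1 := Nat.mul_le_mul_left _ (hf i)
    _ = m i := Nat.mul_one _

lemma natDegree_phi_Pg {α : ℝ} (hα : (1:ℝ)/2 ≤ α) (d : ℕ) :
    (phi n (Pg n α d)).natDegree = 2 * d := by
  rw [phi_Pg]
  have hv : (gegenbauer α d).eval 1 ≠ 0 := by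
    have := (geg_one_ge hα d).1; linarith
  rw [Polynomial.natDegree_C_mul hv]
  have hX : (1 + Polynomial.X ^ 2 : Polynomial ℝ) = Polynomial.X ^ 2 + Polynomial.C 1 := by
    rw [Polynomial.C_1]; ring
  rw [hX]
  have hm : (Polynomial.X ^ 2 + Polynomial.C (1:ℝ)).Monic :=
    Polynomial.monic_X_pow_add_C _ (by norm_num)
  rw [hm.natDegree_pow, Polynomial.natDegree_X_pow_add_C]
  ring

lemma totalDegree_Pg {α : ℝ} (hα : (1:ℝ)/2 ≤ α) (d : ℕ) :
    (Pg n α d).totalDegree = 2 * d := by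
  refine le_antisymm (totalDegree_Pg_le α d) ?_
  rw [← natDegree_phi_Pg hα d]
  refine natDegree_aeval_le _ (fun i => ?_) _
  refine Fin.cases ?_ (fun j => ?_) i
  · simp
  · simp

end GplAux

open MvPolynomial in
/-- With `r = (1-n)/2` and `p = 2(l+d-r)`, the function `g_{p,l}` is a polynomial
in `(t,x)` of total degree `2d`. -/
theorem gpl_is_polynomial_of_degree (n : ℕ) (hn : 2 ≤ n) (r : ℝ)
    (hr : r = (1 - (n : ℝ)) / 2) (l d : ℕ) :
    ∃ P : MvPolynomial (Fin (n + 1)) ℝ,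
      P.totalDegree = 2 * d ∧
      ∀ (t : ℝ) (x : Fin n → ℝ), gpl r l d t x = eval (Fin.cons t x) P := by
  set α : ℝ := (l : ℝ) - r with hα
  have hα2 : (1:ℝ)/2 ≤ α := by
    have hn' : (2:ℝ) ≤ (n : ℝ) := by exact_mod_cast hn
    have hl : (0:ℝ) ≤ (l : ℝ) := Nat.cast_nonneg l
    rw [hα, hr]; linarith
  refine ⟨GplAux.Pg n α d, GplAux.totalDegree_Pg hα2 d, fun t x => ?_⟩
  rw [gpl, ← hα]
  exact (GplAux.eval_Pg α t x d).symm
end
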